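/- Let p, q, s ∈ ℝ with p ≠ 0, let (a_n)_{n≥0} be a real sequence, and let (a_n^k) satisfy a_n^0 = a_n and a_n^k = ((p·n+q)/k)·a_n^{k−1} + (s/k)·a_{n+1}^{k−1} for n ≥ 0, k ≥ 1. Then the ordinary generating function of the final sequence satisfies ā(t) = exp(q t) · A( (s/p)·(exp(p t) − 1) ) as formal power series in ℝ⟦t⟧, where the right-hand side is the product of the formal exponential exp(qt) with the formal substitution of the zero-constant-term series (s/p)(exp(pt) − 1) into the exponential generating function A of the initial sequence. -/

import Mathlib

open PowerSeries

/-- Formal substitution of the power series `f` into the power series `g`: the series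
`g(f(t))`. For `f` with zero constant term (the case used here), the coefficient of `t^n`
in `g(f(t))` is `Σ_{k ≤ n} (coeff k g) · (coeff n (f^k))`. -/
noncomputable def substPS (f g : PowerSeries ℝ) : PowerSeries ℝ :=
  PowerSeries.mk fun n =>
    ∑ k ∈ Finset.range (n + 1), PowerSeries.coeff k g * PowerSeries.coeff n (f ^ k)

/-!
Both sides are the first member `n = 0` of a family of power series satisfying the same system
`F'ₙ = (p n + q) Fₙ + s Fₙ₊₁` with the same constant terms `aₙ`. For the array this is the recurrence
read on the rows `Σₖ aₙᵏ tᵏ`; for `Fₙ = exp((p n + q) t) · Aₙ((s/p)(exp(p t) - 1))`, where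
`Aₙ = A⁽ⁿ⁾` is the exponential generating function of the shifted sequence, it follows from the
chain rule, since the derivative of `(s/p)(exp(p t) - 1)` is `s exp(p t)`. A solution of the system
is determined by its constant terms, because the system determines `coeff (k+1)` from `coeff k`.
-/

lemma coeff_pow_eq_zero_of_lt {R : Type*} [CommRing R] {f : R⟦X⟧} (hf : constantCoeff f = 0)
    {i k : ℕ} (hik : i < k) : coeff i (f ^ k) = 0 :=
  X_pow_dvd_iff.1 (pow_dvd_pow_of_dvd (X_dvd_iff.2 hf) k) i hik

lemma substPS_eq_subst {f : ℝ⟦X⟧} (hf : constantCoeff f = 0) (g : ℝ⟦X⟧) :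
    substPS f g = g.subst f := by
  ext e
  rw [coeff_subst' (HasSubst.of_constantCoeff_zero' hf), substPS, coeff_mk,
    finsum_eq_sum_of_support_subset _ (s := Finset.range (e + 1))]
  · simp only [smul_eq_mul]
  · intro d hd
    by_contra hde
    simp only [Finset.coe_range, Set.mem_Iio, not_lt] at hde
    exact hd (by simp only [coeff_pow_eq_zero_of_lt hf (by omega : e < d), smul_zero])

lemma derivative_substPS {f : ℝ⟦X⟧} (hf : constantCoeff f = 0) (g : ℝ⟦X⟧) :
    d⁄dX ℝ (substPS f g) = substPS f (d⁄dX ℝ g) * d⁄dX ℝ f := by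
  rw [substPS_eq_subst hf, substPS_eq_subst hf,
    derivative_subst (HasSubst.of_constantCoeff_zero' hf)]

lemma constantCoeff_substPS (f g : ℝ⟦X⟧) : constantCoeff (substPS f g) = constantCoeff g := by
  rw [← coeff_zero_eq_constantCoeff_apply, ← coeff_zero_eq_constantCoeff_apply]
  simp [substPS]

lemma derivative_rescale {R : Type*} [CommRing R] (c : R) (f : R⟦X⟧) :
    d⁄dX R (rescale c f) = C c * rescale c (d⁄dX R f) := by
  ext n
  simp only [coeff_derivative, coeff_rescale, coeff_C_mul, pow_succ]
  ring

lemma constantCoeff_rescale_exp {A : Type*} [CommRing A] [Algebra ℚ A] (c : A) :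
    constantCoeff (rescale c (exp A)) = 1 := by
  rw [← coeff_zero_eq_constantCoeff_apply, coeff_rescale]
  simp

lemma derivative_rescale_exp {A : Type*} [CommRing A] [Algebra ℚ A] (c : A) :
    d⁄dX A (rescale c (exp A)) = C c * rescale c (exp A) := by
  rw [derivative_rescale, derivative_exp]

section ShiftSystem

variable {K : Type*} [Field K] [CharZero K]

lemma eq_of_derivative_eq_shift_system (c : ℕ → K) (s : K) {G H : ℕ → K⟦X⟧}
    (hG : ∀ n, d⁄dX K (G n) = C (c n) * G n + C s * G (n + 1))
    (hH : ∀ n, d⁄dX K (H n) = C (c n) * H n + C s * H (n + 1))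
    (h0 : ∀ n, constantCoeff (G n) = constantCoeff (H n)) : G = H := by
  suffices h : ∀ k n, coeff k (G n) = coeff k (H n) from funext fun n => ext fun k => h k n
  intro k
  induction k with
  | zero => simpa using h0
  | succ k ih =>
    intro n
    have hGk := congrArg (coeff k) (hG n)
    have hHk := congrArg (coeff k) (hH n)
    simp only [coeff_derivative, map_add, coeff_C_mul, ih] at hGk hHk
    exact mul_right_cancel₀ (Nat.cast_add_one_ne_zero k) (hGk.trans hHk.symm)

noncomputable def shiftedEGF (a : ℕ → K) (n : ℕ) : K⟦X⟧ :=
  mk fun m => a (n + m) / m.factorial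

lemma derivative_shiftedEGF (a : ℕ → K) (n : ℕ) :
    d⁄dX K (shiftedEGF a n) = shiftedEGF a (n + 1) := by
  ext m
  rw [coeff_derivative, shiftedEGF, shiftedEGF, coeff_mk, coeff_mk, Nat.factorial_succ,
    show n + (m + 1) = n + 1 + m by omega]
  push_cast
  field_simp

end ShiftSystem

lemma derivative_mk_of_recurrence (p q s : ℝ) (a : ℕ → ℕ → ℝ)
    (hrec : ∀ n k, a n (k + 1) =
      (p * (n : ℝ) + q) / ((k : ℝ) + 1) * a n k + s / ((k : ℝ) + 1) * a (n + 1) k) (n : ℕ) :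
    d⁄dX ℝ (mk fun k => a n k) =
      C (p * n + q) * mk (fun k => a n k) + C s * mk (fun k => a (n + 1) k) := by
  ext k
  rw [coeff_derivative, coeff_mk, map_add, coeff_C_mul, coeff_C_mul, coeff_mk, coeff_mk, hrec]
  field_simp

lemma derivative_rescale_exp_mul_substPS {p s : ℝ} {f : ℝ⟦X⟧} (hf : constantCoeff f = 0)
    (hdf : d⁄dX ℝ f = C s * rescale p (exp ℝ)) (q : ℝ) (a₀ : ℕ → ℝ) (n : ℕ) :
    d⁄dX ℝ (rescale (p * n + q) (exp ℝ) * substPS f (shiftedEGF a₀ n)) =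
      C (p * n + q) * (rescale (p * n + q) (exp ℝ) * substPS f (shiftedEGF a₀ n)) +
        C s * (rescale (p * (n + 1 : ℕ) + q) (exp ℝ) * substPS f (shiftedEGF a₀ (n + 1))) := by
  have hexp : rescale (p * (n + 1 : ℕ) + q) (exp ℝ) =
      rescale (p * n + q) (exp ℝ) * rescale p (exp ℝ) := by
    rw [exp_mul_exp_eq_exp_add]
    push_cast
    ring_nf
  rw [Derivation.leibniz, derivative_substPS hf, derivative_shiftedEGF, hdf, derivative_rescale_exp,
    hexp, smul_eq_mul, smul_eq_mul]
  ring

/-- Theorem 2.15: if `a_n^k = ((pn+q)/k) a_n^{k-1} + (s/k) a_{n+1}^{k-1}` with `p ≠ 0`,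
then the ordinary generating function of the final sequence is
`exp(qt) · A((s/p)(exp(pt) - 1))`. -/
theorem ogf_final_eq (p q s : ℝ) (hp : p ≠ 0) (a₀ : ℕ → ℝ) (a : ℕ → ℕ → ℝ)
    (h0 : ∀ n, a n 0 = a₀ n)
    (hrec : ∀ n k, a n (k + 1) =
      (p * (n : ℝ) + q) / ((k : ℝ) + 1) * a n k + s / ((k : ℝ) + 1) * a (n + 1) k) :
    PowerSeries.mk (fun k => a 0 k) =
      rescale q (exp ℝ) *
        substPS (PowerSeries.C (s / p) * (rescale p (exp ℝ) - 1))
          (PowerSeries.mk fun n => a₀ n / n.factorial) := by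
  set f : ℝ⟦X⟧ := C (s / p) * (rescale p (exp ℝ) - 1)
  have hf : constantCoeff f = 0 := by simp [f, constantCoeff_rescale_exp]
  have hdf : d⁄dX ℝ f = C s * rescale p (exp ℝ) := by
    simp only [f, Derivation.leibniz, map_sub, derivative_C, Derivation.map_one_eq_zero,
      derivative_rescale_exp, smul_eq_mul, sub_zero, mul_zero, add_zero, ← mul_assoc, ← map_mul,
      div_mul_cancel₀ s hp]
  have hrows := eq_of_derivative_eq_shift_system (fun n : ℕ => p * n + q) s
    (G := fun n => mk fun k => a n k)
    (H := fun n => rescale (p * n + q) (exp ℝ) * substPS f (shiftedEGF a₀ n))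
    (derivative_mk_of_recurrence p q s a hrec)
    (derivative_rescale_exp_mul_substPS hf hdf q a₀)
    (fun n => by simp [constantCoeff_rescale_exp, constantCoeff_substPS, shiftedEGF, h0])
  simpa [shiftedEGF] using congrFun hrows 0
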